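/- arXiv:2406.17054 — 2 statements merged into one kernel-verified Lean document; each statement's English description precedes it below -/
import Mathlib

section
/- Let W be a nonempty measurable space, p > 0, b ∈ [1,2], λ > 0, and let G be an arbitrary real-valued function on the space M(W) of finite signed measures on W. Define G_λ(ν) = G(ν) + (λ/2)·‖ν‖_TV² for ν ∈ M(W), and for each Borel probability measure μ on ℝ × W with ∫ |r|^{pb} dμ < ∞ define F_{λ,b,p}(μ) = G(ĥᵖμ) + (λ/2)·( ∫ |r|^{pb} dμ )^{2/b}, where ĥᵖμ is the signed p-homogeneous projection of μ. If G_λ attains its minimum over M(W), then F_{λ,b,p} attains its minimum over the set of probability measures μ on ℝ × W with ∫ |r|^{pb} dμ < ∞, and the two minimum values are equal. -/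
/-!
If `ν = ĥᵖμ`, then `‖ν‖_TV ≤ ∫ |r|^p dμ ≤ (∫ |r|^(pb) dμ)^(1/b)`, the second step by Jensen
since `b ≥ 1`; hence `F_{λ,b,p}(μ) ≥ G_λ(ĥᵖμ) ≥ G_λ(ν*)`. Conversely every `ν` is the projection
of a probability measure attaining equality: with `m = ‖ν‖_TV` and Jordan decomposition
`ν = ν⁺ - ν⁻`, place `ν⁺ / m` at height `r = m^(1/p)` and `ν⁻ / m` at height `-m^(1/p)`
(a Dirac mass at `r = 0` if `ν = 0`), so that `∫ |r|^(pb) = m^b`. Lifting the minimiser `ν*`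
of `G_λ` in this way gives a minimiser of `F_{λ,b,p}` with the same value.
-/

open MeasureTheory Set
open scoped ENNReal

@[fun_prop]
theorem Real.measurable_sign : Measurable Real.sign :=
  Measurable.ite measurableSet_Iio measurable_const
    (Measurable.ite measurableSet_Ioi measurable_const measurable_const)

theorem Real.abs_sign_mul_le (r x : ℝ) : |Real.sign r * x| ≤ |x| := by
  rw [abs_mul]
  rcases Real.sign_apply_eq r with h | h | h <;> simp [h]

theorem MeasureTheory.SignedMeasure.totalVariation_univ_le_lintegral_enorm
    {X W : Type*} [MeasurableSpace X] [MeasurableSpace W]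
    {ν : SignedMeasure W} {μ : Measure X} {h : X → W} (hh : Measurable h) {f : X → ℝ}
    (hν : ∀ A, MeasurableSet A → ν A = ∫ x in h ⁻¹' A, f x ∂μ) :
    ν.totalVariation univ ≤ ∫⁻ x, ‖f x‖ₑ ∂μ := by
  have hle : ν.totalVariation ≤ (μ.withDensity fun x => ‖f x‖ₑ).map h := by
    -- the variation is the least measure dominating `A ↦ ‖ν A‖ₑ`
    rw [ν.totalVariation_eq_variation]
    refine VectorMeasure.variation_le_of_forall_enorm_le fun A hA => ?_
    rw [hν A hA, Measure.map_apply hh hA, withDensity_apply _ (hh hA)]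
    exact enorm_integral_le_lintegral_enorm _
  simpa [Measure.map_apply hh MeasurableSet.univ] using Measure.le_iff'.1 hle univ

theorem MeasureTheory.Integrable.of_integrable_rpow {α : Type*} [MeasurableSpace α]
    {μ : Measure α} [IsFiniteMeasure μ] {f : α → ℝ} {b : ℝ} (hb : 1 ≤ b)
    (hf : AEStronglyMeasurable f μ) (hf0 : 0 ≤ f) (hfb : Integrable (fun x => f x ^ b) μ) :
    Integrable f μ := by
  refine ((integrable_const 1).add hfb).mono' hf (Filter.Eventually.of_forall fun x => ?_)
  rw [Real.norm_of_nonneg (hf0 x), Pi.add_apply]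
  rcases le_or_gt (f x) 1 with h | h
  · linarith [Real.rpow_nonneg (hf0 x) b]
  · linarith [Real.self_le_rpow_of_one_le h.le hb]

theorem MeasureTheory.rpow_integral_le_integral_rpow {α : Type*} [MeasurableSpace α]
    {μ : Measure α} [IsProbabilityMeasure μ] {f : α → ℝ} {b : ℝ} (hb : 1 ≤ b)
    (hf0 : 0 ≤ f) (hf : Integrable f μ) (hfb : Integrable (fun x => f x ^ b) μ) :
    (∫ x, f x ∂μ) ^ b ≤ ∫ x, f x ^ b ∂μ :=
  (convexOn_rpow hb).map_integral_le (Real.continuous_rpow_const (by linarith)).continuousOn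
    isClosed_Ici (Filter.Eventually.of_forall hf0) hf hfb

section

variable {W : Type*} [MeasurableSpace W]

def IsSignedHomogeneousProjection (p : ℝ) (μ : Measure (ℝ × W)) (ν : SignedMeasure W) : Prop :=
  ∀ A : Set W, MeasurableSet A →
    ν A = ∫ x in {x : ℝ × W | x.2 ∈ A}, Real.sign x.1 * |x.1| ^ p ∂μ

namespace IsSignedHomogeneousProjection

variable {p : ℝ} {μ : Measure (ℝ × W)} {ν : SignedMeasure W}

theorem totalVariation_toReal_le (hν : IsSignedHomogeneousProjection p μ ν)
    (hint : Integrable (fun x : ℝ × W => |x.1| ^ p) μ) :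
    (ν.totalVariation univ).toReal ≤ ∫ x, |x.1| ^ p ∂μ := by
  have hnonneg : ∀ x : ℝ × W, 0 ≤ |x.1| ^ p := fun x => by positivity
  refine ENNReal.toReal_le_of_le_ofReal (integral_nonneg hnonneg) ?_
  calc ν.totalVariation univ ≤ ∫⁻ x, ‖Real.sign x.1 * |x.1| ^ p‖ₑ ∂μ :=
        SignedMeasure.totalVariation_univ_le_lintegral_enorm measurable_snd hν
    _ ≤ ∫⁻ x, ENNReal.ofReal (|x.1| ^ p) ∂μ := lintegral_mono fun x => by
        rw [Real.enorm_eq_ofReal_abs]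
        exact ENNReal.ofReal_le_ofReal
          ((Real.abs_sign_mul_le _ _).trans (abs_of_nonneg (hnonneg x)).le)
    _ = ENNReal.ofReal (∫ x, |x.1| ^ p ∂μ) :=
        (ofReal_integral_eq_lintegral_ofReal hint (Filter.Eventually.of_forall hnonneg)).symm

theorem sq_totalVariation_le [IsProbabilityMeasure μ] (hν : IsSignedHomogeneousProjection p μ ν)
    {b : ℝ} (hb : 1 ≤ b) (hint : Integrable (fun x : ℝ × W => |x.1| ^ (p * b)) μ) :
    (ν.totalVariation univ).toReal ^ 2 ≤ (∫ x, |x.1| ^ (p * b) ∂μ) ^ (2 / b) := by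
  have hmul : ∀ x : ℝ × W, |x.1| ^ (p * b) = (|x.1| ^ p) ^ b := fun x =>
    Real.rpow_mul (abs_nonneg _) p b
  simp only [hmul] at hint ⊢
  have hint₁ : Integrable (fun x : ℝ × W => |x.1| ^ p) μ :=
    hint.of_integrable_rpow hb (Measurable.aestronglyMeasurable (by fun_prop))
      fun x => by positivity
  have hI : 0 ≤ ∫ x, |x.1| ^ p ∂μ := integral_nonneg fun x => by positivity
  calc (ν.totalVariation univ).toReal ^ 2 ≤ (∫ x, |x.1| ^ p ∂μ) ^ 2 := by
        gcongr
        exact hν.totalVariation_toReal_le hint₁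
    _ = ((∫ x, |x.1| ^ p ∂μ) ^ b) ^ (2 / b) := by
        rw [← Real.rpow_mul hI, mul_div_cancel₀ _ (by positivity), Real.rpow_two]
    _ ≤ (∫ x, (|x.1| ^ p) ^ b ∂μ) ^ (2 / b) := by
        gcongr
        exact rpow_integral_le_integral_rpow hb (fun x => by positivity) hint₁ hint

theorem smul_measure (hν : IsSignedHomogeneousProjection p μ ν) (c : ℝ≥0∞) :
    IsSignedHomogeneousProjection p (c • μ) (c.toReal • ν) := fun A hA => by
  rw [smul_apply, hν A hA, Measure.restrict_smul, integral_smul_measure, smul_eq_mul]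

end IsSignedHomogeneousProjection

noncomputable def twoLevelLift (a : ℝ) (ν₁ ν₂ : Measure W) : Measure (ℝ × W) :=
  ν₁.map (fun w => (a, w)) + ν₂.map (fun w => (-a, w))

section TwoLevelLift

variable {a : ℝ} {ν₁ ν₂ : Measure W}

theorem twoLevelLift_apply_univ : twoLevelLift a ν₁ ν₂ univ = ν₁ univ + ν₂ univ := by
  simp [twoLevelLift, Measure.map_apply measurable_prodMk_left MeasurableSet.univ]

variable {u : ℝ → ℝ}

theorem integrable_comp_fst_map_prodMk_left (hu : Measurable u) (a : ℝ) (ν : Measure W)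
    [IsFiniteMeasure ν] : Integrable (fun x : ℝ × W => u x.1) (ν.map (fun w => (a, w))) :=
  (integrable_map_measure (hu.comp measurable_fst).aestronglyMeasurable
    measurable_prodMk_left.aemeasurable).mpr (by exact integrable_const (u a))

variable [IsFiniteMeasure ν₁] [IsFiniteMeasure ν₂]

theorem integrable_twoLevelLift (hu : Measurable u) :
    Integrable (fun x : ℝ × W => u x.1) (twoLevelLift a ν₁ ν₂) :=
  (integrable_comp_fst_map_prodMk_left hu a ν₁).add_measure
    (integrable_comp_fst_map_prodMk_left hu (-a) ν₂)

theorem setIntegral_twoLevelLift (hu : Measurable u) {A : Set W} (hA : MeasurableSet A) :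
    ∫ x in {x : ℝ × W | x.2 ∈ A}, u x.1 ∂twoLevelLift a ν₁ ν₂
      = ν₁.real A * u a + ν₂.real A * u (-a) := by
  have hS : MeasurableSet {x : ℝ × W | x.2 ∈ A} := measurable_snd hA
  have hu' : Measurable fun x : ℝ × W => u x.1 := hu.comp measurable_fst
  rw [twoLevelLift, Measure.restrict_add,
    integral_add_measure (integrable_comp_fst_map_prodMk_left hu a ν₁).integrableOn
      (integrable_comp_fst_map_prodMk_left hu (-a) ν₂).integrableOn,
    setIntegral_map hS hu'.aestronglyMeasurable measurable_prodMk_left.aemeasurable,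
    setIntegral_map hS hu'.aestronglyMeasurable measurable_prodMk_left.aemeasurable]
  simp

theorem integral_twoLevelLift (hu : Measurable u) :
    ∫ x, u x.1 ∂twoLevelLift a ν₁ ν₂ = ν₁.real univ * u a + ν₂.real univ * u (-a) := by
  simpa using setIntegral_twoLevelLift (a := a) (ν₁ := ν₁) (ν₂ := ν₂) hu MeasurableSet.univ

end TwoLevelLift

theorem isSignedHomogeneousProjection_twoLevelLift (p a : ℝ) (ν₁ ν₂ : Measure W)
    [IsFiniteMeasure ν₁] [IsFiniteMeasure ν₂] :
    IsSignedHomogeneousProjection p (twoLevelLift a ν₁ ν₂)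
      ((Real.sign a * |a| ^ p) • (ν₁.toSignedMeasure - ν₂.toSignedMeasure)) := fun A hA => by
  rw [setIntegral_twoLevelLift (u := fun r => Real.sign r * |r| ^ p) (by fun_prop) hA, smul_apply,
    sub_apply, Measure.toSignedMeasure_apply_measurable hA,
    Measure.toSignedMeasure_apply_measurable hA, Real.sign_neg, abs_neg, smul_eq_mul]
  ring

theorem exists_isProbabilityMeasure_isSignedHomogeneousProjection [Nonempty W] {p : ℝ}
    (hp : 0 < p) (ν : SignedMeasure W) {q : ℝ} (hq : q ≠ 0) :
    ∃ μ : Measure (ℝ × W), IsProbabilityMeasure μ ∧ IsSignedHomogeneousProjection p μ ν ∧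
      Integrable (fun x : ℝ × W => |x.1| ^ q) μ ∧
      ∫ x, |x.1| ^ q ∂μ = (ν.totalVariation univ).toReal ^ (q / p) := by
  set M := ν.totalVariation univ
  have hMtop : M ≠ ⊤ := measure_ne_top _ _
  have hu : Measurable fun r : ℝ => |r| ^ q := by fun_prop
  rcases eq_or_ne M 0 with hM | hM
  · have hν : ν = 0 := by
      ext A hA
      exact ν.null_of_totalVariation_zero (measure_mono_null (subset_univ A) hM)
    refine ⟨twoLevelLift 0 (Measure.dirac (Classical.arbitrary W)) 0,
      ⟨by simp [twoLevelLift_apply_univ]⟩, ?_, integrable_twoLevelLift hu, ?_⟩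
    · simpa [hν] using isSignedHomogeneousProjection_twoLevelLift p 0
        (Measure.dirac (Classical.arbitrary W)) 0
    · rw [integral_twoLevelLift hu, hM]
      simp [Real.zero_rpow hq, Real.zero_rpow (div_ne_zero hq hp.ne')]
  · set m := M.toReal
    have hm : 0 < m := ENNReal.toReal_pos hM hMtop
    set J := ν.toJordanDecomposition
    have hJ : J.posPart univ + J.negPart univ = M := rfl
    have hJreal : J.posPart.real univ + J.negPart.real univ = m := by
      rw [← measureReal_add_apply]; rfl
    set a := m ^ p⁻¹
    have ha : 0 < a := by positivity
    refine ⟨M⁻¹ • twoLevelLift a J.posPart J.negPart, ⟨?_⟩, ?_, ?_, ?_⟩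
    · rw [Measure.smul_apply, twoLevelLift_apply_univ, smul_eq_mul, hJ,
        ENNReal.inv_mul_cancel hM hMtop]
    · convert (isSignedHomogeneousProjection_twoLevelLift p a J.posPart J.negPart).smul_measure M⁻¹
      rw [← JordanDecomposition.toSignedMeasure, ν.toSignedMeasure_toJordanDecomposition, smul_smul,
        Real.sign_of_pos ha, abs_of_pos ha, ← Real.rpow_mul hm.le, inv_mul_cancel₀ hp.ne',
        Real.rpow_one, one_mul, ENNReal.toReal_inv, inv_mul_cancel₀ hm.ne', one_smul]
    · exact (integrable_twoLevelLift hu).smul_measure (ENNReal.inv_ne_top.2 hM)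
    · rw [integral_smul_measure, integral_twoLevelLift hu, abs_neg, ← add_mul, hJreal,
        abs_of_pos ha, ← Real.rpow_mul hm.le, ENNReal.toReal_inv, smul_eq_mul,
        inv_mul_cancel_left₀ hm.ne', inv_mul_eq_div]

end

/-- value-equality part of Proposition F.2 / Proposition 3.1.
If `G_λ(ν) = G(ν) + (λ/2)‖ν‖_TV²` attains its minimum over finite signed measures on `W`,
then the lifted objective `F_{λ,b,p}(μ) = G(ĥᵖμ) + (λ/2)(∫|r|^(pb) dμ)^(2/b)` attains its
minimum over probability measures `μ` on `ℝ × W` with `∫|r|^(pb) dμ < ∞`, and the two minimum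
values are equal.  The signed `p`-homogeneous projection `ĥᵖμ` is encoded by the predicate
that `ν A = ∫_{ℝ×A} sign r · |r|^p dμ` for every measurable `A`. -/
theorem stmt_2 {W : Type*} [MeasurableSpace W] [Nonempty W]
    (p b lam : ℝ) (hp : 0 < p) (hb : b ∈ Set.Icc (1 : ℝ) 2) (hlam : 0 < lam)
    (G : SignedMeasure W → ℝ)
    (νstar : SignedMeasure W)
    (hmin : ∀ ν : SignedMeasure W,
      G νstar + lam / 2 * ((νstar.totalVariation Set.univ).toReal) ^ 2
        ≤ G ν + lam / 2 * ((ν.totalVariation Set.univ).toReal) ^ 2) :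
    ∃ (μ₀ : Measure (ℝ × W)) (ν₀ : SignedMeasure W),
      IsProbabilityMeasure μ₀ ∧
      Integrable (fun x : ℝ × W => |x.1| ^ (p * b)) μ₀ ∧
      (∀ A : Set W, MeasurableSet A →
        ν₀ A = ∫ x in {x : ℝ × W | x.2 ∈ A}, Real.sign x.1 * |x.1| ^ p ∂μ₀) ∧
      (∀ (μ : Measure (ℝ × W)) (ν : SignedMeasure W),
        IsProbabilityMeasure μ →
        Integrable (fun x : ℝ × W => |x.1| ^ (p * b)) μ →
        (∀ A : Set W, MeasurableSet A →
          ν A = ∫ x in {x : ℝ × W | x.2 ∈ A}, Real.sign x.1 * |x.1| ^ p ∂μ) →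
        G ν₀ + lam / 2 * (∫ x : ℝ × W, |x.1| ^ (p * b) ∂μ₀) ^ ((2 : ℝ) / b)
          ≤ G ν + lam / 2 * (∫ x : ℝ × W, |x.1| ^ (p * b) ∂μ) ^ ((2 : ℝ) / b)) ∧
      G ν₀ + lam / 2 * (∫ x : ℝ × W, |x.1| ^ (p * b) ∂μ₀) ^ ((2 : ℝ) / b)
        = G νstar + lam / 2 * ((νstar.totalVariation Set.univ).toReal) ^ 2 := by
  have hb0 : b ≠ 0 := by linarith [hb.1]
  obtain ⟨μ₀, hμ₀, hproj₀, hint₀, hmoment₀⟩ :=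
    exists_isProbabilityMeasure_isSignedHomogeneousProjection hp νstar (mul_ne_zero hp.ne' hb0)
  have hvalue : (∫ x : ℝ × W, |x.1| ^ (p * b) ∂μ₀) ^ ((2 : ℝ) / b)
      = (νstar.totalVariation univ).toReal ^ 2 := by
    rw [hmoment₀, mul_div_cancel_left₀ b hp.ne', ← Real.rpow_mul ENNReal.toReal_nonneg,
      mul_div_cancel₀ _ hb0, Real.rpow_two]
  refine ⟨μ₀, νstar, hμ₀, hint₀, hproj₀, fun μ ν _ hint hproj => ?_, by rw [hvalue]⟩
  rw [hvalue]
  calc _ ≤ G ν + lam / 2 * (ν.totalVariation univ).toReal ^ 2 := hmin ν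
    _ ≤ _ := by
      gcongr
      exact IsSignedHomogeneousProjection.sq_totalVariation_le hproj hb.1 hint
end

section
/- Let W be a measurable space, λ > 0, and G : M(W) → ℝ a function on the space of finite signed measures on W such that G_λ(ν) := G(ν) + (λ/2)·‖ν‖_TV² is bounded below. For η ∈ P(W) define J_λ(η) = inf { G(ν) + (λ/2) ∫ (dν/dη)² dη : ν ∈ M(W), |ν| ≪ η, ∫ (dν/dη)² dη < ∞ }. If ν* ≠ 0 minimizes G_λ over M(W), then η* = ‖ν*‖_TV^{-1}·|ν*| satisfies J_λ(η*) = G_λ(ν*) and J_λ(η*) ≤ J_λ(η) for every η ∈ P(W); i.e. η* is a minimizer of J_λ. -/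
open MeasureTheory

/-- The total variation norm of a finite signed measure. -/
noncomputable def tvNorm {W : Type*} [MeasurableSpace W] (ν : SignedMeasure W) : ℝ :=
  (ν.totalVariation Set.univ).toReal

/-- The bilevel objective
`J_λ(η) = inf { G(ν) + (λ/2) ∫ (dν/dη)² dη : ν ∈ M(W), |ν| ≪ η, ∫ (dν/dη)² dη < ∞ }`. -/
noncomputable def Jlam {W : Type*} [MeasurableSpace W]
    (lam : ℝ) (G : SignedMeasure W → ℝ) (η : Measure W) : ℝ :=
  sInf { z : ℝ | ∃ ν : SignedMeasure W,
    ν.totalVariation ≪ η ∧ Integrable (fun w => ν.rnDeriv η w ^ 2) η ∧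
    z = G ν + lam / 2 * ∫ w, ν.rnDeriv η w ^ 2 ∂η }

/-!
By Jensen's inequality, for a probability measure `η` and `|ν| ≪ η`,
`‖ν‖_TV² = (∫ |dν/dη| dη)² ≤ ∫ (dν/dη)² dη`, so every value entering `J_λ(η)` dominates
`G_λ(ν) ≥ G_λ(ν*)`, whence `J_λ(η) ≥ G_λ(ν*)`. For `η* = |ν*| / ‖ν*‖_TV` the density `dν*/dη*` has
constant modulus `‖ν*‖_TV`, so `ν*` itself is admissible for `J_λ(η*)` with value `G_λ(ν*)`.
-/

namespace MeasureTheory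

open scoped ENNReal

variable {α : Type*} [MeasurableSpace α]

lemma Measure.MutuallySingular.ae_rnDeriv_eq_zero_or {p n μ : Measure α} (h : p ⟂ₘ n) :
    ∀ᵐ x ∂μ, p.rnDeriv μ x = 0 ∨ n.rnDeriv μ x = 0 := by
  obtain ⟨S, hS, hpS, hnS⟩ := h
  have vanish_on {ρ : Measure α} {T : Set α} (hT : MeasurableSet T) (hρT : ρ T = 0) :
      ∀ᵐ x ∂μ, x ∈ T → ρ.rnDeriv μ x = 0 := by
    refine (ae_restrict_iff' hT).mp <|
      (lintegral_eq_zero_iff (Measure.measurable_rnDeriv _ _)).mp ?_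
    exact le_antisymm ((Measure.setLIntegral_rnDeriv_le T).trans hρT.le) bot_le
  filter_upwards [vanish_on hS hpS, vanish_on hS.compl hnS] with x hp hn
  by_cases hx : x ∈ S
  · exact .inl (hp hx)
  · exact .inr (hn hx)

lemma Measure.rnDeriv_smul_self (μ : Measure α) [IsFiniteMeasure μ] {r : ℝ≥0∞} (hr : r ≠ 0)
    (hr_top : r ≠ ⊤) : μ.rnDeriv (r • μ) =ᵐ[μ] fun _ => r⁻¹ := by
  filter_upwards [Measure.rnDeriv_smul_right_of_ne_top μ μ hr hr_top, Measure.rnDeriv_self μ]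
    with x hx hself
  simp [hx, hself]

lemma sq_integral_le_integral_sq {μ : Measure α} [IsProbabilityMeasure μ] {f : α → ℝ}
    (hf : MemLp f 2 μ) : (∫ x, f x ∂μ) ^ 2 ≤ ∫ x, f x ^ 2 ∂μ := by
  have h := ProbabilityTheory.variance_nonneg f μ
  rw [ProbabilityTheory.variance_eq_sub hf] at h
  simpa using h

namespace SignedMeasure

lemma totalVariation_ne_zero {s : SignedMeasure α} (hs : s ≠ 0) : s.totalVariation ≠ 0 := by
  contrapose! hs
  ext i _
  exact s.null_of_totalVariation_zero (by simp [hs])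

lemma abs_rnDeriv_ae_eq (s : SignedMeasure α) (μ : Measure α) [SigmaFinite μ] :
    (fun x => |s.rnDeriv μ x|) =ᵐ[μ] fun x => (s.totalVariation.rnDeriv μ x).toReal := by
  filter_upwards [s.toJordanDecomposition.mutuallySingular.ae_rnDeriv_eq_zero_or,
    Measure.rnDeriv_add' s.toJordanDecomposition.posPart s.toJordanDecomposition.negPart μ,
    Measure.rnDeriv_lt_top s.toJordanDecomposition.posPart μ,
    Measure.rnDeriv_lt_top s.toJordanDecomposition.negPart μ]
    with x hzero hadd hp hn
  rw [totalVariation, hadd, Pi.add_apply, ENNReal.toReal_add hp.ne hn.ne, rnDeriv_def]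
  rcases hzero with h | h <;> simp [h]

lemma tvNorm_eq_integral_abs_rnDeriv (s : SignedMeasure α) {μ : Measure α} [SigmaFinite μ]
    (hs : s.totalVariation ≪ μ) : tvNorm s = ∫ x, |s.rnDeriv μ x| ∂μ := by
  rw [integral_congr_ae (s.abs_rnDeriv_ae_eq μ),
    integral_toReal (Measure.measurable_rnDeriv _ _).aemeasurable (Measure.rnDeriv_lt_top _ _),
    Measure.lintegral_rnDeriv hs, tvNorm]

lemma tvNorm_sq_le_integral_rnDeriv_sq (s : SignedMeasure α) {μ : Measure α}
    [IsProbabilityMeasure μ] (hs : s.totalVariation ≪ μ)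
    (hint : Integrable (fun x => s.rnDeriv μ x ^ 2) μ) :
    tvNorm s ^ 2 ≤ ∫ x, s.rnDeriv μ x ^ 2 ∂μ := by
  have hmem : MemLp (s.rnDeriv μ) 2 μ :=
    (memLp_two_iff_integrable_sq (s.measurable_rnDeriv μ).aestronglyMeasurable).mpr hint
  simpa [tvNorm_eq_integral_abs_rnDeriv s hs] using sq_integral_le_integral_sq hmem.abs

lemma abs_rnDeriv_normalized_ae_eq {s : SignedMeasure α} (hs : s ≠ 0) :
    (fun x => |s.rnDeriv ((s.totalVariation Set.univ)⁻¹ • s.totalVariation) x|)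
      =ᵐ[(s.totalVariation Set.univ)⁻¹ • s.totalVariation] fun _ => tvNorm s := by
  have ht0 : s.totalVariation Set.univ ≠ 0 :=
    fun h => totalVariation_ne_zero hs (Measure.measure_univ_eq_zero.mp h)
  have hconst := s.totalVariation.rnDeriv_smul_self
    (ENNReal.inv_ne_zero.mpr (measure_ne_top _ _)) (ENNReal.inv_ne_top.mpr ht0)
  filter_upwards [s.abs_rnDeriv_ae_eq _, Measure.smul_absolutelyContinuous.ae_le hconst]
    with x habs hx
  rw [habs, hx, inv_inv, tvNorm]

end SignedMeasure

end MeasureTheory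

section Jlam

open MeasureTheory

variable {W : Type*} [MeasurableSpace W] {lam : ℝ} {G : SignedMeasure W → ℝ} {η : Measure W}

lemma le_Jlam {a : ℝ} (ha : ∀ ν : SignedMeasure W, ν.totalVariation ≪ η →
      Integrable (fun w => ν.rnDeriv η w ^ 2) η → a ≤ G ν + lam / 2 * ∫ w, ν.rnDeriv η w ^ 2 ∂η) :
    a ≤ Jlam lam G η := by
  -- `sInf ∅ = 0`, so nonemptiness matters; the zero measure is always admissible.
  refine le_csInf ⟨_, 0, ?_, ?_, rfl⟩ ?_
  · simp [SignedMeasure.totalVariation_zero]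
  · simp [SignedMeasure.rnDeriv, SignedMeasure.toJordanDecomposition_zero]
  · rintro z ⟨ν, hν, hint, rfl⟩
    exact ha ν hν hint

lemma Jlam_le {a : ℝ} (ha : ∀ ν : SignedMeasure W, ν.totalVariation ≪ η →
      Integrable (fun w => ν.rnDeriv η w ^ 2) η → a ≤ G ν + lam / 2 * ∫ w, ν.rnDeriv η w ^ 2 ∂η)
    {ν : SignedMeasure W} (hν : ν.totalVariation ≪ η)
    (hint : Integrable (fun w => ν.rnDeriv η w ^ 2) η) :
    Jlam lam G η ≤ G ν + lam / 2 * ∫ w, ν.rnDeriv η w ^ 2 ∂η := by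
  refine csInf_le ⟨a, ?_⟩ ⟨ν, hν, hint, rfl⟩
  rintro z ⟨ν', hν', hint', rfl⟩
  exact ha ν' hν' hint'

lemma le_objective_of_forall_le_tvNorm (hlam : 0 ≤ lam) [IsProbabilityMeasure η] {a : ℝ}
    (ha : ∀ ν : SignedMeasure W, a ≤ G ν + lam / 2 * tvNorm ν ^ 2) (ν : SignedMeasure W)
    (hν : ν.totalVariation ≪ η) (hint : Integrable (fun w => ν.rnDeriv η w ^ 2) η) :
    a ≤ G ν + lam / 2 * ∫ w, ν.rnDeriv η w ^ 2 ∂η := by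
  grw [ha ν, ν.tvNorm_sq_le_integral_rnDeriv_sq hν hint]

end Jlam

theorem stmt_8_general {W : Type*} [MeasurableSpace W]
    (lam : ℝ) (hlam : 0 < lam) (G : SignedMeasure W → ℝ)
    (νstar : SignedMeasure W) (hne : νstar ≠ 0)
    (hmin : ∀ ν : SignedMeasure W,
      G νstar + lam / 2 * tvNorm νstar ^ 2 ≤ G ν + lam / 2 * tvNorm ν ^ 2)
    (ηstar : Measure W)
    (hη : ηstar = (νstar.totalVariation Set.univ)⁻¹ • νstar.totalVariation) :
    Jlam lam G ηstar = G νstar + lam / 2 * tvNorm νstar ^ 2 ∧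
    ∀ η : Measure W, IsProbabilityMeasure η → Jlam lam G ηstar ≤ Jlam lam G η := by
  have hlower (η : Measure W) [IsProbabilityMeasure η] :=
    le_objective_of_forall_le_tvNorm (η := η) hlam.le hmin
  have : NeZero νstar.totalVariation := ⟨SignedMeasure.totalVariation_ne_zero hne⟩
  have : IsProbabilityMeasure ηstar := hη ▸ inferInstance
  have hac : νstar.totalVariation ≪ ηstar :=
    hη ▸ Measure.absolutelyContinuous_smul (ENNReal.inv_ne_zero.mpr (measure_ne_top _ _))
  have hsq : (fun w => νstar.rnDeriv ηstar w ^ 2) =ᵐ[ηstar] fun _ => tvNorm νstar ^ 2 := by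
    filter_upwards [hη ▸ SignedMeasure.abs_rnDeriv_normalized_ae_eq hne] with w hw
    rw [← sq_abs, hw]
  have hJ : Jlam lam G ηstar = G νstar + lam / 2 * tvNorm νstar ^ 2 := by
    refine le_antisymm ?_ (le_Jlam (hlower ηstar))
    calc Jlam lam G ηstar ≤ _ := Jlam_le (hlower ηstar) hac ((integrable_const _).congr hsq.symm)
      _ = _ := by simp [integral_congr_ae hsq]
  exact ⟨hJ, fun η _ => hJ ▸ le_Jlam (hlower η)⟩

/-- forward direction of the minimizer characterization in Proposition 3.3.
If `G_λ` is bounded below and `ν* ≠ 0` minimizes `G_λ`, then `η* = ‖ν*‖_TV⁻¹ • |ν*|`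
satisfies `J_λ(η*) = G_λ(ν*)` and minimizes `J_λ` over probability measures. -/
theorem stmt_8 {W : Type*} [MeasurableSpace W]
    (lam : ℝ) (hlam : 0 < lam) (G : SignedMeasure W → ℝ)
    (c : ℝ)
    (hbdd : ∀ ν : SignedMeasure W, c ≤ G ν + lam / 2 * tvNorm ν ^ 2)
    (νstar : SignedMeasure W) (hne : νstar ≠ 0)
    (hmin : ∀ ν : SignedMeasure W,
      G νstar + lam / 2 * tvNorm νstar ^ 2 ≤ G ν + lam / 2 * tvNorm ν ^ 2)
    (ηstar : Measure W)
    (hη : ηstar = (νstar.totalVariation Set.univ)⁻¹ • νstar.totalVariation) :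
    Jlam lam G ηstar = G νstar + lam / 2 * tvNorm νstar ^ 2 ∧
    ∀ η : Measure W, IsProbabilityMeasure η → Jlam lam G ηstar ≤ Jlam lam G η :=
  stmt_8_general lam hlam G νstar hne hmin ηstar hη
end
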